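/- arXiv:2503.09284 — 2 statements merged into one kernel-verified Lean document; each statement's English description precedes it below -/
import Mathlib

section
/- Let (X_n, x_n), n ≥ 1, and (X, x) be proper, geodesically complete CAT(−1) spaces. If (X_n, x_n) → (X, x) in the pointed Gromov–Hausdorff sense, then the visual boundaries (∂X_n, ρ_{x_n}) converge to (∂X, ρ_x) in the Gromov–Hausdorff sense as compact metric spaces. -/
open Filter Topology Metric
open scoped ENNReal

universe u v

/-- A semi-metric (separating function) on a compact metrizable space: continuous, symmetric,
nonnegative, and vanishing exactly on the diagonal. -/
def IsSemiMetric {Z : Type*} [TopologicalSpace Z] (ρ : Z → Z → ℝ) : Prop :=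
  Continuous (Function.uncurry ρ) ∧ (∀ ξ η, ρ ξ η = ρ η ξ) ∧
    (∀ ξ η, 0 ≤ ρ ξ η) ∧ ∀ ξ η, ρ ξ η = 0 ↔ ξ = η

/-- An antipodal function: a semi-metric of diameter at most one such that every point has an
antipode at distance one. -/
def IsAntipodalFn {Z : Type*} [TopologicalSpace Z] (ρ : Z → Z → ℝ) : Prop :=
  IsSemiMetric ρ ∧ (∀ ξ η, ρ ξ η ≤ 1) ∧ ∀ ξ, ∃ η, ρ ξ η = 1

/-- An `ε`-isometry between semi-metric spaces: distortion less than `ε`, and the image is an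
`ε`-net. -/
def IsEpsIsometry {Z₁ : Type*} {Z₂ : Type*} (ρ₁ : Z₁ → Z₁ → ℝ) (ρ₂ : Z₂ → Z₂ → ℝ)
    (ε : ℝ) (f : Z₁ → Z₂) : Prop :=
  (∀ ξ η : Z₁, |ρ₂ (f ξ) (f η) - ρ₁ ξ η| < ε) ∧ ∀ ζ : Z₂, ∃ ξ : Z₁, ρ₂ (f ξ) ζ < ε

/-- AI-convergence of a sequence of semi-metric spaces `(Z n, ρ n)` to `(W, ρ₀)`: there are
`ε n`-isometries `(Z n, ρ n) → (W, ρ₀)` with `ε n → 0+`. -/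
def AIConverges {Z : ℕ → Type u} (ρ : ∀ n, Z n → Z n → ℝ) {W : Type v} (ρ₀ : W → W → ℝ) : Prop :=
  ∃ ε : ℕ → ℝ, (∀ n, 0 < ε n) ∧ Tendsto ε atTop (𝓝 0) ∧
    ∀ n, ∃ f : Z n → W, IsEpsIsometry (ρ n) ρ₀ (ε n) f

/-- Pointed Gromov–Hausdorff convergence of pointed metric spaces `(X n, p n) → (Y, q)`:
for every `R > 0` and `ε > 0`, for all sufficiently large `n` there is a map between the closed
balls of radius `R` around the base points, sending base point to base point, with distortion
less than `ε` and whose image is an `ε`-net. -/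
def PointedGHConverges (X : ℕ → Type u) [∀ n, MetricSpace (X n)] (p : ∀ n, X n)
    (Y : Type v) [MetricSpace Y] (q : Y) : Prop :=
  ∀ (R : ℝ) (hR : 0 < R) (ε : ℝ) (_ : 0 < ε), ∃ N : ℕ, ∀ n, N ≤ n →
    ∃ f : Metric.closedBall (p n) R → Metric.closedBall q R,
      ((f ⟨p n, Metric.mem_closedBall_self hR.le⟩ : Y) = q) ∧
      (∀ a b : Metric.closedBall (p n) R,
        |dist (f a : Y) (f b : Y) - dist (a : X n) (b : X n)| < ε) ∧
      ∀ z : Metric.closedBall q R, ∃ a : Metric.closedBall (p n) R, dist (f a : Y) (z : Y) < ε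

/-- A geodesic segment from `x` to `y`, parametrized by arclength on `[0, dist x y]`. -/
def IsGeodesicSegment {X : Type*} [MetricSpace X] (γ : ℝ → X) (x y : X) : Prop :=
  γ 0 = x ∧ γ (dist x y) = y ∧
    ∀ s ∈ Set.Icc (0:ℝ) (dist x y), ∀ t ∈ Set.Icc (0:ℝ) (dist x y), dist (γ s) (γ t) = |s - t|

/-- A geodesic metric space: any two points are joined by a geodesic segment. -/
def IsGeodesicSpace (X : Type*) [MetricSpace X] : Prop :=
  ∀ x y : X, ∃ γ : ℝ → X, IsGeodesicSegment γ x y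

/-- Geodesic completeness: any geodesic segment extends to a bi-infinite geodesic. -/
def IsGeodesicallyComplete (X : Type*) [MetricSpace X] : Prop :=
  ∀ (x y : X) (γ : ℝ → X), IsGeodesicSegment γ x y →
    ∃ γ' : ℝ → X, (∀ s t : ℝ, dist (γ' s) (γ' t) = |s - t|) ∧
      ∀ s ∈ Set.Icc (0:ℝ) (dist x y), γ' s = γ s

/-- A CAT(−1) space: distances between points on two geodesic segments issuing from a common
vertex of a geodesic triangle are bounded by the corresponding distances in a comparison
triangle (one with the same side lengths) in the hyperbolic plane (the upper half-plane with
its hyperbolic metric, of curvature −1). -/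
def IsCATMinusOne (X : Type*) [MetricSpace X] : Prop :=
  ∀ (x y z : X) (γ₁ γ₂ : ℝ → X), IsGeodesicSegment γ₁ x y → IsGeodesicSegment γ₂ x z →
    ∀ (x' y' z' : UpperHalfPlane) (γ₁' γ₂' : ℝ → UpperHalfPlane),
      dist x' y' = dist x y → dist x' z' = dist x z → dist y' z' = dist y z →
      IsGeodesicSegment γ₁' x' y' → IsGeodesicSegment γ₂' x' z' →
      ∀ s ∈ Set.Icc (0:ℝ) (dist x y), ∀ t ∈ Set.Icc (0:ℝ) (dist x z),
        dist (γ₁ s) (γ₂ t) ≤ dist (γ₁' s) (γ₂' t)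

/-- A geodesic ray: an arclength-parametrized geodesic defined on `[0, ∞)`. -/
def GeodesicRay (X : Type u) [MetricSpace X] : Type u :=
  {γ : ℝ → X // ∀ s t : ℝ, 0 ≤ s → 0 ≤ t → dist (γ s) (γ t) = |s - t|}

/-- Two geodesic rays are asymptotic if they remain at bounded distance from each other. -/
def AsymptoticRays {X : Type u} [MetricSpace X] (γ₁ γ₂ : GeodesicRay X) : Prop :=
  ∃ C : ℝ, ∀ t : ℝ, 0 ≤ t → dist (γ₁.1 t) (γ₂.1 t) ≤ C

/-- The Gromov boundary: equivalence classes of asymptotic geodesic rays. -/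
def GromovBoundary (X : Type u) [MetricSpace X] : Type u :=
  Quot (AsymptoticRays (X := X))

/-- `ρ` is the visual metric on the Gromov boundary based at `x`:
`ρ(ξ, η) = exp (−(ξ|η)_x)`, characterized by
`exp (−(γ₁ t | γ₂ t)_x) → ρ([γ₁], [γ₂])` as `t → ∞` for any geodesic rays `γ₁, γ₂`. -/
def IsVisualMetric {X : Type u} [MetricSpace X] (x : X)
    (ρ : GromovBoundary X → GromovBoundary X → ℝ) : Prop :=
  ∀ γ₁ γ₂ : GeodesicRay X,
    Tendsto
      (fun t : ℝ =>
        Real.exp (-((dist (γ₁.1 t) x + dist (γ₂.1 t) x - dist (γ₁.1 t) (γ₂.1 t)) / 2)))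
      atTop (𝓝 (ρ (Quot.mk _ γ₁) (Quot.mk _ γ₂)))

/-! For rays `σ₁, σ₂` from the base point of a CAT(−1) space, comparison with the hyperbolic law of
cosines shows that `t ↦ sinh (d(σ₁ t, σ₂ t) / 2) / sinh t` is nondecreasing. Together with the
triangle inequality this pins the visual distance of the endpoints to within `exp (-T)` of
`exp ((d(σ₁ T, σ₂ T) - 2T) / 2)`, so up to `exp (-T)` the visual metric is read off from the sphere
of radius `T` about the base point, which a pointed Gromov–Hausdorff approximation distorts only
slightly. Every boundary point is the endpoint of a unique ray from the base point (a limit of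
segments towards the points of any ray representing it), so sending `ξ` to the endpoint of the ray
from `y` through the image of the time-`T` point of the ray to `ξ` gives the required
`ε`-isometries. -/

open Real Set

lemma two_mul_sinh_mul_exp_neg (t : ℝ) : 2 * sinh t * exp (-t) = 1 - exp (-(2 * t)) := by
  rw [sinh_eq, show -(2 * t) = -t + -t by ring, exp_add, exp_neg]
  field_simp

lemma abs_exp_sub_exp_le_of_nonpos {a b : ℝ} (ha : a ≤ 0) (hb : b ≤ 0) :
    |exp a - exp b| ≤ |a - b| := by
  wlog hab : b ≤ a generalizing a b
  · rw [abs_sub_comm, abs_sub_comm a]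
    exact this hb ha (le_of_not_ge hab)
  have h := one_sub_le_exp_neg (a - b)
  rw [abs_of_nonneg (sub_nonneg.2 (exp_le_exp.2 hab)), abs_of_nonneg (sub_nonneg.2 hab)]
  calc exp a - exp b = exp a * (1 - exp (-(a - b))) := by
        rw [mul_sub, ← exp_add]; ring_nf
    _ ≤ 1 * (a - b) := mul_le_mul (exp_le_one_iff.2 ha) (by linarith)
      (sub_nonneg.2 (exp_le_one_iff.2 (by linarith))) zero_le_one
    _ = a - b := one_mul _

namespace UpperHalfPlane

private lemma rotatedImAxis_den_pos (r b : ℝ) : 0 < (1 - r ^ 2) ^ 2 + (2 * r) ^ 2 * exp b ^ 2 := by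
  rcases eq_or_ne r 0 with rfl | hr
  · norm_num
  · positivity

/-- The unit-speed geodesic through `I` making the angle `θ = 4 arctan r` with the imaginary axis:
the image of `b ↦ exp b • I` under the rotation by `θ` about `I`. -/
noncomputable def rotatedImAxis (r b : ℝ) : ℍ :=
  ⟨⟨2 * r * (1 - r ^ 2) * (1 - exp b ^ 2) / ((1 - r ^ 2) ^ 2 + (2 * r) ^ 2 * exp b ^ 2),
    exp b * (1 + r ^ 2) ^ 2 / ((1 - r ^ 2) ^ 2 + (2 * r) ^ 2 * exp b ^ 2)⟩,
    div_pos (by positivity) (rotatedImAxis_den_pos r b)⟩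

lemma rotatedImAxis_re (r b : ℝ) : (rotatedImAxis r b).re =
    2 * r * (1 - r ^ 2) * (1 - exp b ^ 2) / ((1 - r ^ 2) ^ 2 + (2 * r) ^ 2 * exp b ^ 2) := rfl

lemma rotatedImAxis_im (r b : ℝ) : (rotatedImAxis r b).im =
    exp b * (1 + r ^ 2) ^ 2 / ((1 - r ^ 2) ^ 2 + (2 * r) ^ 2 * exp b ^ 2) := rfl

lemma rotatedImAxis_apply_zero (r : ℝ) : rotatedImAxis r 0 = rotatedImAxis 0 0 := by
  have : (0 : ℝ) < (1 + r ^ 2) ^ 2 := by positivity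
  apply ext_re_im
  · simp [rotatedImAxis_re]
  · rw [rotatedImAxis_im, rotatedImAxis_im, exp_zero,
      show (1 - r ^ 2) ^ 2 + (2 * r) ^ 2 * 1 ^ 2 = (1 + r ^ 2) ^ 2 by ring]
    simp [this.ne']

lemma cosh_dist_rotatedImAxis (r a b : ℝ) :
    cosh (dist (rotatedImAxis 0 a) (rotatedImAxis r b)) =
      cosh (a - b) + 2 * (2 * r / (1 + r ^ 2)) ^ 2 * sinh a * sinh b := by
  have := rotatedImAxis_den_pos r b
  rw [cosh_dist']
  simp only [cosh_eq, sinh_eq, exp_sub, exp_neg, rotatedImAxis_re, rotatedImAxis_im]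
  set D := (1 - r ^ 2) ^ 2 + (2 * r) ^ 2 * exp b ^ 2 with hD
  field_simp
  rw [hD]
  ring

lemma dist_rotatedImAxis (r a b : ℝ) :
    dist (rotatedImAxis r a) (rotatedImAxis r b) = |a - b| := by
  have hcosh : cosh (dist (rotatedImAxis r a) (rotatedImAxis r b)) = cosh |a - b| := by
    have := rotatedImAxis_den_pos r a
    have := rotatedImAxis_den_pos r b
    rw [cosh_abs, cosh_dist']
    simp only [cosh_eq, exp_sub, exp_neg, rotatedImAxis_re, rotatedImAxis_im]
    set Da := (1 - r ^ 2) ^ 2 + (2 * r) ^ 2 * exp a ^ 2 with hDa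
    set Db := (1 - r ^ 2) ^ 2 + (2 * r) ^ 2 * exp b ^ 2 with hDb
    field_simp
    rw [hDa, hDb]
    ring
  exact cosh_injOn dist_nonneg (abs_nonneg (a - b)) hcosh

/-- Two unit-speed geodesics issuing from a common point at an angle `θ` with `1 - cos θ = k`,
as in the hyperbolic law of cosines. -/
theorem exists_geodesic_hinge {k : ℝ} (hk₀ : 0 ≤ k) (hk₂ : k ≤ 2) :
    ∃ γ₁ γ₂ : ℝ → ℍ, γ₁ 0 = γ₂ 0 ∧ (∀ s t, dist (γ₁ s) (γ₁ t) = |s - t|) ∧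
      (∀ s t, dist (γ₂ s) (γ₂ t) = |s - t|) ∧
      ∀ s t, cosh (dist (γ₁ s) (γ₂ t)) = cosh (s - t) + k * sinh s * sinh t := by
  have hcont : ContinuousOn (fun r : ℝ => 2 * (2 * r / (1 + r ^ 2)) ^ 2) (Icc 0 1) :=
    (Continuous.continuousOn (by fun_prop (disch := intro; positivity)))
  obtain ⟨r, -, hr⟩ := intermediate_value_Icc zero_le_one hcont
    (show k ∈ Icc _ _ by constructor <;> norm_num [hk₀, hk₂])
  refine ⟨rotatedImAxis 0, rotatedImAxis r, (rotatedImAxis_apply_zero r).symm,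
    dist_rotatedImAxis 0, dist_rotatedImAxis r, fun s t => ?_⟩
  rw [cosh_dist_rotatedImAxis, ← hr]

end UpperHalfPlane

section Comparison

variable {X : Type*} [MetricSpace X]

lemma cosh_dist_sub_dist_le (x p q : X) : cosh (dist x p - dist x q) ≤ cosh (dist p q) := by
  rw [cosh_le_cosh, abs_of_nonneg dist_nonneg, dist_comm x p, dist_comm x q]
  exact abs_dist_sub_le p q x

lemma cosh_dist_le_cosh_add (x p q : X) : cosh (dist p q) ≤ cosh (dist x p + dist x q) :=
  cosh_strictMonoOn.monotoneOn dist_nonneg (add_nonneg dist_nonneg dist_nonneg)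
    (dist_triangle_left p q x)

lemma abs_dist_sub_dist_le (a b a' b' : X) :
    |dist a b - dist a' b'| ≤ dist a a' + dist b b' := by
  simpa only [Real.dist_eq] using dist_dist_dist_le a b a' b'

lemma abs_dist_sub_lt_of_dist_lt {p₁ p₂ q₁ q₂ : X} {c δ : ℝ} (h₁ : dist q₁ p₁ < δ)
    (h₂ : dist q₂ p₂ < δ) (h : |dist p₁ p₂ - c| < δ) : |dist q₁ q₂ - c| < 3 * δ := by
  have := abs_dist_sub_dist_le q₁ q₂ p₁ p₂
  have := abs_sub_le (dist q₁ q₂) (dist p₁ p₂) c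
  linarith

lemma isGeodesicSegment_of_dist_eq {γ : ℝ → X} {c : ℝ} (hc : 0 ≤ c)
    (hγ : ∀ s ∈ Icc 0 c, ∀ t ∈ Icc 0 c, dist (γ s) (γ t) = |s - t|) :
    IsGeodesicSegment γ (γ 0) (γ c) := by
  have hd : dist (γ 0) (γ c) = c := by
    rw [hγ 0 (left_mem_Icc.2 hc) c (right_mem_Icc.2 hc), zero_sub, abs_neg, abs_of_nonneg hc]
  exact ⟨rfl, by rw [hd], by rwa [hd]⟩

lemma isGeodesicSegment_reverse {γ : ℝ → X} {c : ℝ} (hc : 0 ≤ c)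
    (hγ : ∀ s ∈ Icc 0 c, ∀ t ∈ Icc 0 c, dist (γ s) (γ t) = |s - t|) :
    IsGeodesicSegment (fun s => γ (c - s)) (γ c) (γ 0) := by
  have hrev : ∀ s ∈ Icc 0 c, c - s ∈ Icc 0 c := fun s hs => ⟨by linarith [hs.2], by linarith [hs.1]⟩
  simpa using isGeodesicSegment_of_dist_eq (γ := fun s => γ (c - s)) hc fun s hs t ht => by
    rw [hγ _ (hrev s hs) _ (hrev t ht), abs_sub_comm]
    ring_nf

/-- The coefficient of `sinh s * sinh t` is `1 - cos θ` for the angle `θ` at `x` of the comparison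
triangle. -/
theorem IsCATMinusOne.cosh_dist_le (hX : IsCATMinusOne X) {x p q : X} {σ τ : ℝ → X}
    (hσ : IsGeodesicSegment σ x p) (hτ : IsGeodesicSegment τ x q) (hp : 0 < dist x p)
    (hq : 0 < dist x q) {s t : ℝ} (hs : s ∈ Icc 0 (dist x p)) (ht : t ∈ Icc 0 (dist x q)) :
    cosh (dist (σ s) (τ t)) ≤ cosh (s - t) +
      (cosh (dist p q) - cosh (dist x p - dist x q)) / (sinh (dist x p) * sinh (dist x q)) *
        (sinh s * sinh t) := by
  set k := (cosh (dist p q) - cosh (dist x p - dist x q)) / (sinh (dist x p) * sinh (dist x q))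
    with hk
  have hsinh : 0 < sinh (dist x p) * sinh (dist x q) :=
    mul_pos (sinh_pos_iff.2 hp) (sinh_pos_iff.2 hq)
  have hk₀ : 0 ≤ k := div_nonneg (sub_nonneg.2 (cosh_dist_sub_dist_le x p q)) hsinh.le
  have hk₂ : k ≤ 2 := by
    have := cosh_dist_le_cosh_add x p q
    rw [cosh_add] at this
    rw [div_le_iff₀ hsinh, cosh_sub]
    linarith
  obtain ⟨γ₁, γ₂, h0, hγ₁, hγ₂, hcosh⟩ := UpperHalfPlane.exists_geodesic_hinge hk₀ hk₂
  have hd₁ : dist (γ₁ 0) (γ₁ (dist x p)) = dist x p := by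
    rw [hγ₁, zero_sub, abs_neg, abs_of_nonneg dist_nonneg]
  have hd₂ : dist (γ₁ 0) (γ₂ (dist x q)) = dist x q := by
    rw [h0, hγ₂, zero_sub, abs_neg, abs_of_nonneg dist_nonneg]
  have hd₃ : dist (γ₁ (dist x p)) (γ₂ (dist x q)) = dist p q := by
    refine cosh_injOn dist_nonneg dist_nonneg ?_
    rw [hcosh, hk, mul_assoc, div_mul_cancel₀ _ hsinh.ne']
    ring
  have hcomp := hX x p q σ τ hσ hτ _ _ _ γ₁ γ₂ hd₁ hd₂ hd₃
    ⟨rfl, by rw [hd₁], fun a _ b _ => hγ₁ a b⟩ ⟨h0.symm, by rw [hd₂], fun a _ b _ => hγ₂ a b⟩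
    s hs t ht
  calc cosh (dist (σ s) (τ t)) ≤ cosh (dist (γ₁ s) (γ₂ t)) :=
        cosh_strictMonoOn.monotoneOn dist_nonneg dist_nonneg hcomp
    _ = _ := by rw [hcosh, mul_assoc]

theorem IsCATMinusOne.dist_le_of_sub_eq (hX : IsCATMinusOne X) {x p q : X} {σ τ : ℝ → X}
    (hσ : IsGeodesicSegment σ x p) (hτ : IsGeodesicSegment τ x q) (hp : 0 < dist x p)
    (hq : 0 < dist x q) {s t : ℝ} (hs : s ∈ Icc 0 (dist x p)) (ht : t ∈ Icc 0 (dist x q))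
    (hst : s - t = dist x p - dist x q) : dist (σ s) (τ t) ≤ dist p q := by
  have hsinh : 0 < sinh (dist x p) * sinh (dist x q) :=
    mul_pos (sinh_pos_iff.2 hp) (sinh_pos_iff.2 hq)
  have hk : 0 ≤ (cosh (dist p q) - cosh (dist x p - dist x q)) /
      (sinh (dist x p) * sinh (dist x q)) :=
    div_nonneg (sub_nonneg.2 (cosh_dist_sub_dist_le x p q)) hsinh.le
  have hst' : sinh s * sinh t ≤ sinh (dist x p) * sinh (dist x q) :=
    mul_le_mul (sinh_le_sinh.2 hs.2) (sinh_le_sinh.2 ht.2) (sinh_nonneg_iff.2 ht.1)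
      (sinh_nonneg_iff.2 hp.le)
  refine (cosh_strictMonoOn.le_iff_le dist_nonneg dist_nonneg).1 ?_
  calc cosh (dist (σ s) (τ t)) ≤ _ := hX.cosh_dist_le hσ hτ hp hq hs ht
    _ ≤ cosh (dist x p - dist x q) + (cosh (dist p q) - cosh (dist x p - dist x q)) /
          (sinh (dist x p) * sinh (dist x q)) * (sinh (dist x p) * sinh (dist x q)) := by
        rw [hst]
        exact add_le_add_right (mul_le_mul_of_nonneg_left hst' hk) _
    _ = cosh (dist p q) := by rw [div_mul_cancel₀ _ hsinh.ne']; ring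

end Comparison

section Rays

variable {X : Type u} [MetricSpace X]

lemma IsGeodesicallyComplete.exists_line_through (hgc : IsGeodesicallyComplete X)
    (hgeo : IsGeodesicSpace X) (x p : X) :
    ∃ γ : ℝ → X, (∀ s t, dist (γ s) (γ t) = |s - t|) ∧ γ 0 = x ∧ γ (dist x p) = p := by
  obtain ⟨σ, hσ⟩ := hgeo x p
  obtain ⟨γ, hγ, hγσ⟩ := hgc x p σ hσ
  exact ⟨γ, hγ, by rw [hγσ 0 ⟨le_rfl, dist_nonneg⟩, hσ.1],
    by rw [hγσ _ ⟨dist_nonneg, le_rfl⟩, hσ.2.1]⟩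

lemma IsGeodesicallyComplete.exists_ray_through (hgc : IsGeodesicallyComplete X)
    (hgeo : IsGeodesicSpace X) (x p : X) :
    ∃ σ : GeodesicRay X, σ.1 0 = x ∧ σ.1 (dist x p) = p := by
  obtain ⟨γ, hγ, h0, hp⟩ := hgc.exists_line_through hgeo x p
  exact ⟨⟨γ, fun s t _ _ => hγ s t⟩, h0, hp⟩

namespace GeodesicRay

variable {σ σ₁ σ₂ : GeodesicRay X} {x : X} {t : ℝ}

lemma dist_apply_eq (h : σ.1 0 = x) (ht : 0 ≤ t) : dist (σ.1 t) x = t := by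
  rw [← h, σ.2 t 0 ht le_rfl, sub_zero, abs_of_nonneg ht]

lemma isGeodesicSegment (h : σ.1 0 = x) (ht : 0 ≤ t) : IsGeodesicSegment σ.1 x (σ.1 t) :=
  h ▸ isGeodesicSegment_of_dist_eq ht fun a ha b hb => σ.2 a b ha.1 hb.1

lemma dist_apply_le (h₁ : σ₁.1 0 = x) (h₂ : σ₂.1 0 = x) (ht : 0 ≤ t) :
    dist (σ₁.1 t) (σ₂.1 t) ≤ 2 * t := by
  have := dist_triangle_right (σ₁.1 t) (σ₂.1 t) x
  rw [dist_apply_eq h₁ ht, dist_apply_eq h₂ ht] at this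
  linarith

lemma dist_apply_of_apply_eq {p : X} {T : ℝ} (hp : σ.1 (dist x p) = p) (hT : 0 ≤ T) :
    dist (σ.1 T) p = |T - dist x p| := by
  rw [← σ.2 T _ hT dist_nonneg, hp]

end GeodesicRay

lemma IsGeodesicallyComplete.nonempty_gromovBoundary (hgc : IsGeodesicallyComplete X)
    (hgeo : IsGeodesicSpace X) (x : X) :
    Nonempty (GromovBoundary X) :=
  let ⟨σ, _⟩ := hgc.exists_ray_through hgeo x x
  ⟨Quot.mk _ σ⟩

theorem exists_geodesicRay_tendsto_ultrafilter [ProperSpace X] {ι : Type*} (U : Ultrafilter ι)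
    {x : X} {S : ι → ℝ → X} (hS : ∀ i s t, dist (S i s) (S i t) = |s - t|) (h0 : ∀ i, S i 0 = x) :
    ∃ σ : GeodesicRay X, σ.1 0 = x ∧ ∀ t, Tendsto (fun i => S i t) U (𝓝 (σ.1 t)) := by
  have hlim : ∀ t, ∃ z, Tendsto (fun i => S i t) U (𝓝 z) := fun t => by
    obtain ⟨z, -, hz⟩ := (isCompact_closedBall x |t|).ultrafilter_le_nhds (U.map fun i => S i t)
      (by
        rw [Ultrafilter.coe_map, le_principal_iff]
        exact mem_map.2 (univ_mem' fun i => by simp [mem_closedBall, ← h0 i, hS]))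
    exact ⟨z, hz⟩
  choose σ hσ using hlim
  have hiso : ∀ s t, dist (σ s) (σ t) = |s - t| := fun s t =>
    tendsto_nhds_unique ((hσ s).dist (hσ t)) (by simp only [hS]; exact tendsto_const_nhds)
  exact ⟨⟨σ, fun s t _ _ => hiso s t⟩,
    tendsto_nhds_unique (hσ 0) (by simp only [h0]; exact tendsto_const_nhds), hσ⟩

end Rays

section Visual

variable {X : Type u} [MetricSpace X] {x : X} {ρ : GromovBoundary X → GromovBoundary X → ℝ}
  {σ₁ σ₂ : GeodesicRay X} {T : ℝ}

namespace IsVisualMetric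

lemma nonneg (hρ : IsVisualMetric x ρ) (ξ η : GromovBoundary X) : 0 ≤ ρ ξ η := by
  induction ξ using Quot.ind with | _ γ₁ => ?_
  induction η using Quot.ind with | _ γ₂ => ?_
  exact ge_of_tendsto' (hρ γ₁ γ₂) fun t => (exp_pos _).le

lemma le_one (hρ : IsVisualMetric x ρ) (ξ η : GromovBoundary X) : ρ ξ η ≤ 1 := by
  induction ξ using Quot.ind with | _ γ₁ => ?_
  induction η using Quot.ind with | _ γ₂ => ?_
  refine le_of_tendsto' (hρ γ₁ γ₂) fun t => exp_le_one_iff.2 ?_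
  have := dist_triangle_right (γ₁.1 t) (γ₂.1 t) x
  linarith

lemma self_eq_zero (hρ : IsVisualMetric x ρ) (ξ : GromovBoundary X) : ρ ξ ξ = 0 := by
  induction ξ using Quot.ind with | _ γ => ?_
  refine tendsto_nhds_unique (hρ γ γ) (squeeze_zero' (.of_forall fun t => (exp_pos _).le)
    (g := fun t => exp (dist (γ.1 0) x - t)) ?_ ?_)
  · filter_upwards [eventually_ge_atTop 0] with t ht
    have := dist_triangle_right (γ.1 t) (γ.1 0) x
    rw [γ.2 t 0 ht le_rfl, sub_zero, abs_of_nonneg ht] at this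
    rw [dist_self, exp_le_exp]
    linarith
  · exact tendsto_exp_atBot.comp (tendsto_atBot_add_const_left _ _ tendsto_neg_atTop_atBot)

lemma tendsto_of_base (hρ : IsVisualMetric x ρ) (h₁ : σ₁.1 0 = x) (h₂ : σ₂.1 0 = x) :
    Tendsto (fun t => exp ((dist (σ₁.1 t) (σ₂.1 t) - 2 * t) / 2)) atTop
      (𝓝 (ρ (Quot.mk _ σ₁) (Quot.mk _ σ₂))) := by
  refine (hρ σ₁ σ₂).congr' ?_
  filter_upwards [eventually_ge_atTop 0] with t ht
  rw [σ₁.dist_apply_eq h₁ ht, σ₂.dist_apply_eq h₂ ht]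
  ring_nf

/-- Along based rays, `t ↦ exp (-(σ₁ t | σ₂ t)_x)` is antitone by the triangle inequality. -/
lemma le_exp_of_base (hρ : IsVisualMetric x ρ) (h₁ : σ₁.1 0 = x) (h₂ : σ₂.1 0 = x)
    (hT : 0 ≤ T) :
    ρ (Quot.mk _ σ₁) (Quot.mk _ σ₂) ≤ exp ((dist (σ₁.1 T) (σ₂.1 T) - 2 * T) / 2) := by
  refine le_of_tendsto (hρ.tendsto_of_base h₁ h₂) ?_
  filter_upwards [eventually_ge_atTop T] with t ht
  have := dist_triangle4 (σ₁.1 t) (σ₁.1 T) (σ₂.1 T) (σ₂.1 t)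
  rw [σ₁.2 t T (hT.trans ht) hT, σ₂.2 T t hT (hT.trans ht), abs_of_nonneg (sub_nonneg.2 ht),
    abs_sub_comm, abs_of_nonneg (sub_nonneg.2 ht)] at this
  rw [exp_le_exp]
  linarith

lemma le_exp_neg_add_of_base (hρ : IsVisualMetric x ρ) (h₁ : σ₁.1 0 = x) (h₂ : σ₂.1 0 = x)
    (hT : 0 ≤ T) : ρ (Quot.mk _ σ₁) (Quot.mk _ σ₂) ≤ exp (-T) + dist (σ₁.1 T) (σ₂.1 T) / 2 := by
  have h := abs_exp_sub_exp_le_of_nonpos (a := (dist (σ₁.1 T) (σ₂.1 T) - 2 * T) / 2) (b := -T)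
    (by linarith [σ₁.dist_apply_le h₁ h₂ hT]) (by linarith)
  rw [show (dist (σ₁.1 T) (σ₂.1 T) - 2 * T) / 2 - -T = dist (σ₁.1 T) (σ₂.1 T) / 2 by ring,
    abs_of_nonneg (div_nonneg dist_nonneg zero_le_two)] at h
  linarith [hρ.le_exp_of_base h₁ h₂ hT, le_abs_self
    (exp ((dist (σ₁.1 T) (σ₂.1 T) - 2 * T) / 2) - exp (-T))]

end IsVisualMetric

end Visual

section CATVisual

variable {X : Type u} [MetricSpace X] {x : X} {ρ : GromovBoundary X → GromovBoundary X → ℝ}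
  {σ₁ σ₂ : GeodesicRay X} {T : ℝ}

theorem IsCATMinusOne.monotoneOn_sinh_half_dist_div_sinh (hX : IsCATMinusOne X)
    (h₁ : σ₁.1 0 = x) (h₂ : σ₂.1 0 = x) :
    MonotoneOn (fun t => sinh (dist (σ₁.1 t) (σ₂.1 t) / 2) / sinh t) (Ioi 0) := by
  intro T (hT : 0 < T) t (ht : 0 < t) hTt
  have hd₁ : dist x (σ₁.1 t) = t := by rw [dist_comm]; exact σ₁.dist_apply_eq h₁ ht.le
  have hd₂ : dist x (σ₂.1 t) = t := by rw [dist_comm]; exact σ₂.dist_apply_eq h₂ ht.le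
  have hcomp := hX.cosh_dist_le (σ₁.isGeodesicSegment h₁ ht.le) (σ₂.isGeodesicSegment h₂ ht.le)
    (by rwa [hd₁]) (by rwa [hd₂]) (s := T) (t := T) (by rw [hd₁]; exact ⟨hT.le, hTt⟩)
    (by rw [hd₂]; exact ⟨hT.le, hTt⟩)
  have hhalf : ∀ d, cosh d = 1 + 2 * sinh (d / 2) ^ 2 := fun d => by
    have := cosh_two_mul (d / 2)
    rw [mul_div_cancel₀ d two_ne_zero, cosh_sq] at this
    rw [this]
    ring
  rw [hd₁, hd₂, sub_self, sub_self, cosh_zero, hhalf (dist (σ₁.1 T) _),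
    hhalf (dist (σ₁.1 t) _)] at hcomp
  set A := sinh (dist (σ₁.1 T) (σ₂.1 T) / 2)
  set B := sinh (dist (σ₁.1 t) (σ₂.1 t) / 2)
  have hST : 0 < sinh T := sinh_pos_iff.2 hT
  have hSt : 0 < sinh t := sinh_pos_iff.2 ht
  have hA : 0 ≤ A := sinh_nonneg_iff.2 (by positivity)
  have hB : 0 ≤ B := sinh_nonneg_iff.2 (by positivity)
  have key : A ^ 2 ≤ B ^ 2 * sinh T ^ 2 / sinh t ^ 2 := by
    have : (1 + 2 * B ^ 2 - 1) / (sinh t * sinh t) * (sinh T * sinh T) =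
        2 * (B ^ 2 * sinh T ^ 2 / sinh t ^ 2) := by ring
    linarith
  show A / sinh T ≤ B / sinh t
  rw [← pow_le_pow_iff_left₀ (div_nonneg hA hST.le) (div_nonneg hB hSt.le) two_ne_zero,
    div_pow, div_pow, div_le_div_iff₀ (by positivity) (by positivity)]
  rw [le_div_iff₀ (by positivity)] at key
  linarith

theorem IsCATMinusOne.exp_sub_exp_le_visual (hX : IsCATMinusOne X) (hρ : IsVisualMetric x ρ)
    (h₁ : σ₁.1 0 = x) (h₂ : σ₂.1 0 = x) (hT : 0 < T) :
    exp ((dist (σ₁.1 T) (σ₂.1 T) - 2 * T) / 2) - exp (-T) ≤ ρ (Quot.mk _ σ₁) (Quot.mk _ σ₂) := by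
  set d := dist (σ₁.1 T) (σ₂.1 T)
  set r := sinh (d / 2) / sinh T
  have hST : 0 < sinh T := sinh_pos_iff.2 hT
  have hsinh_d : 0 ≤ sinh (d / 2) := sinh_nonneg_iff.2 (by positivity)
  have hr : 0 ≤ r := div_nonneg hsinh_d hST.le
  have hρr : r ≤ ρ (Quot.mk _ σ₁) (Quot.mk _ σ₂) := by
    have hlim : Tendsto (fun t => r * (1 - exp (-(2 * t)))) atTop (𝓝 (r * (1 - 0))) :=
      (tendsto_exp_atBot.comp (tendsto_neg_atTop_atBot.comp
        (tendsto_id.const_mul_atTop two_pos))).const_sub 1 |>.const_mul r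
    rw [sub_zero, mul_one] at hlim
    refine le_of_tendsto_of_tendsto hlim (hρ.tendsto_of_base h₁ h₂) ?_
    filter_upwards [eventually_ge_atTop T] with t ht
    have ht0 : 0 < t := hT.trans_le ht
    have hSt : 0 < sinh t := sinh_pos_iff.2 ht0
    calc r * (1 - exp (-(2 * t)))
        ≤ sinh (dist (σ₁.1 t) (σ₂.1 t) / 2) / sinh t * (2 * sinh t * exp (-t)) := by
          rw [two_mul_sinh_mul_exp_neg]
          exact mul_le_mul_of_nonneg_right
            (hX.monotoneOn_sinh_half_dist_div_sinh h₁ h₂ hT ht0 ht)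
            (sub_nonneg.2 (exp_le_one_iff.2 (by linarith)))
      _ = (exp (dist (σ₁.1 t) (σ₂.1 t) / 2) - exp (-(dist (σ₁.1 t) (σ₂.1 t) / 2))) *
            exp (-t) := by
          rw [sinh_eq]; field_simp
      _ ≤ exp (dist (σ₁.1 t) (σ₂.1 t) / 2) * exp (-t) := by
          gcongr; linarith [exp_pos (-(dist (σ₁.1 t) (σ₂.1 t) / 2))]
      _ = exp ((dist (σ₁.1 t) (σ₂.1 t) - 2 * t) / 2) := by rw [← exp_add]; ring_nf
  calc exp ((d - 2 * T) / 2) - exp (-T)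
      ≤ exp (d / 2 + -T) - exp (-(d / 2) + -T) := by
        gcongr
        · ring_nf; rfl
        · linarith [show 0 ≤ d from dist_nonneg]
    _ = 2 * sinh (d / 2) * exp (-T) := by rw [sinh_eq, exp_add, exp_add]; ring
    _ ≤ r := by
        rw [le_div_iff₀ hST]
        calc 2 * sinh (d / 2) * exp (-T) * sinh T = sinh (d / 2) * (1 - exp (-(2 * T))) := by
              rw [← two_mul_sinh_mul_exp_neg]; ring
          _ ≤ sinh (d / 2) := mul_le_of_le_one_right hsinh_d (by linarith [exp_pos (-(2 * T))])
    _ ≤ ρ (Quot.mk _ σ₁) (Quot.mk _ σ₂) := hρr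

theorem IsCATMinusOne.abs_visual_sub_exp_le (hX : IsCATMinusOne X) (hρ : IsVisualMetric x ρ)
    (h₁ : σ₁.1 0 = x) (h₂ : σ₂.1 0 = x) (hT : 0 < T) :
    |ρ (Quot.mk _ σ₁) (Quot.mk _ σ₂) - exp ((dist (σ₁.1 T) (σ₂.1 T) - 2 * T) / 2)| ≤
      exp (-T) :=
  abs_sub_le_iff.2 ⟨by linarith [hρ.le_exp_of_base h₁ h₂ hT.le, exp_pos (-T)],
    by linarith [hX.exp_sub_exp_le_visual hρ h₁ h₂ hT]⟩

theorem IsCATMinusOne.abs_visual_sub_visual_le {Y : Type v} [MetricSpace Y] {y : Y}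
    {ρ' : GromovBoundary Y → GromovBoundary Y → ℝ} {τ₁ τ₂ : GeodesicRay Y}
    (hX : IsCATMinusOne X) (hY : IsCATMinusOne Y) (hρ : IsVisualMetric x ρ)
    (hρ' : IsVisualMetric y ρ') (h₁ : σ₁.1 0 = x) (h₂ : σ₂.1 0 = x) (h₁' : τ₁.1 0 = y)
    (h₂' : τ₂.1 0 = y) (hT : 0 < T) :
    |ρ' (Quot.mk _ τ₁) (Quot.mk _ τ₂) - ρ (Quot.mk _ σ₁) (Quot.mk _ σ₂)| ≤
      2 * exp (-T) + |dist (τ₁.1 T) (τ₂.1 T) - dist (σ₁.1 T) (σ₂.1 T)| / 2 := by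
  have hσ := hX.abs_visual_sub_exp_le hρ h₁ h₂ hT
  have hτ := hY.abs_visual_sub_exp_le hρ' h₁' h₂' hT
  have hexp := abs_exp_sub_exp_le_of_nonpos
    (a := (dist (τ₁.1 T) (τ₂.1 T) - 2 * T) / 2) (b := (dist (σ₁.1 T) (σ₂.1 T) - 2 * T) / 2)
    (by linarith [τ₁.dist_apply_le h₁' h₂' hT.le]) (by linarith [σ₁.dist_apply_le h₁ h₂ hT.le])
  rw [← sub_div, sub_sub_sub_cancel_right, abs_div, abs_two] at hexp
  rw [abs_le] at *
  constructor <;> linarith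

theorem IsCATMinusOne.apply_eq_of_mk_eq (hX : IsCATMinusOne X) (hρ : IsVisualMetric x ρ)
    (h₁ : σ₁.1 0 = x) (h₂ : σ₂.1 0 = x) (h : Quot.mk AsymptoticRays σ₁ = Quot.mk _ σ₂)
    (hT : 0 < T) : σ₁.1 T = σ₂.1 T := by
  have := hX.exp_sub_exp_le_visual hρ h₁ h₂ hT
  rw [h, hρ.self_eq_zero (Quot.mk _ σ₂), sub_nonpos, exp_le_exp] at this
  exact dist_le_zero.1 (by linarith)

theorem IsCATMinusOne.dist_le_of_line_through (hX : IsCATMinusOne X) (γ : GeodesicRay X)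
    {S : ℝ → X} {k t : ℝ} (hS : ∀ s t, dist (S s) (S t) = |s - t|) (h0 : S 0 = x)
    (hk : S (dist x (γ.1 k)) = γ.1 k) (ht : 0 ≤ t) (htk : t + dist (γ.1 0) x < k) :
    dist (S t) (γ.1 t) ≤ dist (γ.1 0) x := by
  set b := dist (γ.1 0) x
  set L := dist x (γ.1 k)
  have hb : 0 ≤ b := dist_nonneg
  have hk0 : 0 ≤ k := by linarith
  have hdk : dist (γ.1 k) (γ.1 0) = k := by rw [γ.2 k 0 hk0 le_rfl, sub_zero, abs_of_nonneg hk0]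
  have hL : k - b ≤ L := by
    have := dist_triangle (γ.1 k) x (γ.1 0)
    rw [hdk, dist_comm (γ.1 k) x, dist_comm x (γ.1 0)] at this
    linarith
  have hA : IsGeodesicSegment (fun s => γ.1 (k - s)) (γ.1 k) (γ.1 0) :=
    isGeodesicSegment_reverse hk0 fun a ha b hb => γ.2 a b ha.1 hb.1
  have hB : IsGeodesicSegment (fun s => S (L - s)) (γ.1 k) x := by
    have := isGeodesicSegment_reverse (γ := S) (c := L) dist_nonneg fun a _ b _ => hS a b
    rwa [hk, h0] at this
  have := hX.dist_le_of_sub_eq hA hB (s := k - t) (t := L - t) (by rw [hdk]; linarith)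
    (by rw [dist_comm]; linarith) (by rw [hdk]; constructor <;> linarith)
    (by rw [dist_comm]; constructor <;> linarith) (by rw [hdk, dist_comm]; ring)
  simp only [sub_sub_cancel] at this
  rwa [dist_comm] at this

theorem IsCATMinusOne.exists_ray_from_mk_eq [ProperSpace X] (hX : IsCATMinusOne X)
    (hgc : IsGeodesicallyComplete X) (hgeo : IsGeodesicSpace X) (x : X) (ξ : GromovBoundary X) :
    ∃ σ : GeodesicRay X, σ.1 0 = x ∧ Quot.mk _ σ = ξ := by
  induction ξ using Quot.ind with | _ γ => ?_
  choose S hS h0 hSk using fun k : ℕ => hgc.exists_line_through hgeo x (γ.1 k)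
  obtain ⟨σ, hσ0, hσ⟩ := exists_geodesicRay_tendsto_ultrafilter (Ultrafilter.of atTop) hS h0
  refine ⟨σ, hσ0, Quot.sound ⟨dist (γ.1 0) x, fun t ht => ?_⟩⟩
  refine le_of_tendsto ((hσ t).dist tendsto_const_nhds) (Ultrafilter.of_le atTop ?_)
  filter_upwards [tendsto_natCast_atTop_atTop.eventually_gt_atTop (t + dist (γ.1 0) x)] with k hk
  exact hX.dist_le_of_line_through γ (hS k) (h0 k) (hSk k) ht hk

end CATVisual

lemma dist_apply_ray_apply_lt {X : Type u} [MetricSpace X] {Y : Type v} [MetricSpace Y] {x : X}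
    {y : Y} {T δ : ℝ} (hT : 0 ≤ T) {F : closedBall x T → closedBall y T}
    (hF0 : (F ⟨x, mem_closedBall_self hT⟩ : Y) = y)
    (hFdist : ∀ a b, |dist (F a : Y) (F b) - dist (a : X) b| < δ) {a : closedBall x T} {z : Y}
    (hz : dist z y = T) (ha : dist (F a : Y) z < δ) {σ : GeodesicRay X}
    (hσa : σ.1 (dist x a) = a) (hσT : σ.1 T ∈ closedBall x T) :
    dist (F ⟨σ.1 T, hσT⟩ : Y) z < 4 * δ := by
  have h₁ := hFdist ⟨σ.1 T, hσT⟩ a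
  have h₂ := hFdist a ⟨x, mem_closedBall_self hT⟩
  rw [hF0] at h₂
  change |_ - dist (a : X) x| < δ at h₂
  have h₃ := abs_sub_le T (dist (F a : Y) y) (dist x a)
  have h₄ := abs_dist_sub_dist_le (F a : Y) y z y
  rw [σ.dist_apply_of_apply_eq hσa hT, abs_lt] at h₁
  rw [dist_comm x (a : X)] at h₁ h₃
  rw [abs_sub_comm T (dist (F a : Y) y)] at h₃
  rw [hz, dist_self, add_zero] at h₄
  linarith [dist_triangle (F ⟨σ.1 T, hσT⟩ : Y) (F a) z]

theorem exists_isEpsIsometry_of_ball_approx {X : Type u} [MetricSpace X] [ProperSpace X]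
    {Y : Type v} [MetricSpace Y] [ProperSpace Y]
    (hgc : IsGeodesicallyComplete X) (hgeo : IsGeodesicSpace X) (hX : IsCATMinusOne X)
    (hgcY : IsGeodesicallyComplete Y) (hgeoY : IsGeodesicSpace Y) (hY : IsCATMinusOne Y)
    {x : X} {y : Y} {ρ : GromovBoundary X → GromovBoundary X → ℝ}
    {ρ' : GromovBoundary Y → GromovBoundary Y → ℝ} (hρ : IsVisualMetric x ρ)
    (hρ' : IsVisualMetric y ρ') {T δ ε : ℝ} (hT : 0 < T) (hTε : exp (-T) ≤ ε / 4)
    (hδε : δ ≤ ε / 10) (F : closedBall x T → closedBall y T)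
    (hF0 : (F ⟨x, mem_closedBall_self hT.le⟩ : Y) = y)
    (hFdist : ∀ a b, |dist (F a : Y) (F b) - dist (a : X) b| < δ)
    (hFnet : ∀ z : closedBall y T, ∃ a, dist (F a : Y) z < δ) :
    ∃ f : GromovBoundary X → GromovBoundary Y, IsEpsIsometry ρ ρ' ε f := by
  have hε : 0 < ε := by linarith [exp_pos (-T)]
  have hFbase : ∀ a, |dist (F a : Y) y - dist (a : X) x| < δ := fun a => by
    have := hFdist a ⟨x, mem_closedBall_self hT.le⟩
    rwa [hF0] at this
  choose σ hσ0 hσ using hX.exists_ray_from_mk_eq hgc hgeo x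
  choose τ hτ0 hτ using hgcY.exists_ray_through hgeoY y
  have hmem : ∀ ξ, (σ ξ).1 T ∈ closedBall x T := fun ξ => by
    rw [mem_closedBall, (σ ξ).dist_apply_eq (hσ0 ξ) hT.le]
  set g : GromovBoundary X → Y := fun ξ => F ⟨(σ ξ).1 T, hmem ξ⟩
  have hτg : ∀ ξ, dist ((τ (g ξ)).1 T) (g ξ) < δ := fun ξ => by
    have : |dist (g ξ) y - T| < δ := by
      simpa only [(σ ξ).dist_apply_eq (hσ0 ξ) hT.le] using hFbase ⟨_, hmem ξ⟩
    rwa [(τ _).dist_apply_of_apply_eq (hτ _) hT.le, abs_sub_comm, dist_comm]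
  refine ⟨fun ξ => Quot.mk _ (τ (g ξ)), fun ξ η => ?_, fun ζ => ?_⟩
  · have := hX.abs_visual_sub_visual_le hY hρ hρ' (hσ0 ξ) (hσ0 η) (hτ0 (g ξ)) (hτ0 (g η)) hT
    rw [hσ ξ, hσ η] at this
    linarith [abs_dist_sub_lt_of_dist_lt (hτg ξ) (hτg η) (hFdist ⟨_, hmem ξ⟩ ⟨_, hmem η⟩)]
  · obtain ⟨υ, hυ0, rfl⟩ := hY.exists_ray_from_mk_eq hgcY hgeoY y ζ
    have hυT : υ.1 T ∈ closedBall y T := by rw [mem_closedBall, υ.dist_apply_eq hυ0 hT.le]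
    obtain ⟨a, ha⟩ := hFnet ⟨_, hυT⟩
    obtain ⟨σa, hσa0, hσa⟩ := hgc.exists_ray_through hgeo x a
    have hσaT' : σa.1 T ∈ closedBall x T := by rw [mem_closedBall, σa.dist_apply_eq hσa0 hT.le]
    refine ⟨Quot.mk _ σa, ?_⟩
    have hσaT : (⟨(σ (Quot.mk _ σa)).1 T, hmem _⟩ : closedBall x T) = ⟨σa.1 T, hσaT'⟩ :=
      Subtype.ext (hX.apply_eq_of_mk_eq hρ (hσ0 _) hσa0 (hσ _) hT)
    have hgυ : dist (g (Quot.mk _ σa)) (υ.1 T) < 4 * δ := by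
      simp only [g, hσaT]
      exact dist_apply_ray_apply_lt hT.le hF0 hFdist (υ.dist_apply_eq hυ0 hT.le) ha hσa hσaT'
    have hτυ : dist ((τ (g (Quot.mk _ σa))).1 T) (υ.1 T) < 5 * δ := by
      linarith [dist_triangle ((τ (g (Quot.mk _ σa))).1 T) (g (Quot.mk _ σa)) (υ.1 T),
        hτg (Quot.mk _ σa)]
    have := hρ'.le_exp_neg_add_of_base (hτ0 (g (Quot.mk _ σa))) hυ0 hT.le
    exact this.trans_lt (by linarith)

lemma exists_isEpsIsometry_two {X : Type u} [MetricSpace X] {Y : Type v} [MetricSpace Y]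
    [Nonempty (GromovBoundary X)] [Nonempty (GromovBoundary Y)] {x : X} {y : Y}
    {ρ : GromovBoundary X → GromovBoundary X → ℝ} {ρ' : GromovBoundary Y → GromovBoundary Y → ℝ}
    (hρ : IsVisualMetric x ρ) (hρ' : IsVisualMetric y ρ') :
    ∃ f : GromovBoundary X → GromovBoundary Y, IsEpsIsometry ρ ρ' 2 f := by
  obtain ⟨η₀⟩ := ‹Nonempty (GromovBoundary Y)›
  obtain ⟨ξ₀⟩ := ‹Nonempty (GromovBoundary X)›
  refine ⟨fun _ => η₀, fun ξ η => ?_, fun ζ => ⟨ξ₀, (hρ'.le_one η₀ ζ).trans_lt one_lt_two⟩⟩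
  rw [hρ'.self_eq_zero, zero_sub, abs_neg, abs_of_nonneg (hρ.nonneg ξ η)]
  exact (hρ.le_one ξ η).trans_lt one_lt_two

lemma IsEpsIsometry.mono {Z₁ Z₂ : Type*} {ρ₁ : Z₁ → Z₁ → ℝ} {ρ₂ : Z₂ → Z₂ → ℝ} {ε ε' : ℝ}
    {f : Z₁ → Z₂} (hf : IsEpsIsometry ρ₁ ρ₂ ε f) (h : ε ≤ ε') : IsEpsIsometry ρ₁ ρ₂ ε' f :=
  ⟨fun ξ η => (hf.1 ξ η).trans_le h, fun ζ => (hf.2 ζ).imp fun _ h' => h'.trans_le h⟩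

theorem aiConverges_of_eventually_exists_isEpsIsometry {Z : ℕ → Type u}
    {ρ : ∀ n, Z n → Z n → ℝ} {W : Type v} {ρ₀ : W → W → ℝ} {C : ℝ}
    (hC : ∀ n, ∃ f, IsEpsIsometry (ρ n) ρ₀ C f)
    (h : ∀ ε > 0, ∀ᶠ n in atTop, ∃ f, IsEpsIsometry (ρ n) ρ₀ ε f) : AIConverges ρ ρ₀ := by
  set S : ℕ → Set ℝ := fun n => {e | 0 < e ∧ ∃ f, IsEpsIsometry (ρ n) ρ₀ e f}
  have hS : ∀ n, (S n).Nonempty := fun n =>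
    let ⟨f, hf⟩ := hC n
    ⟨max C 1, one_pos.trans_le (le_max_right _ _), f, hf.mono (le_max_left _ _)⟩
  have hS₀ : ∀ n, 0 ≤ sInf (S n) := fun n => le_csInf (hS n) fun e he => he.1.le
  have hlim : Tendsto (fun n => sInf (S n)) atTop (𝓝 0) := by
    refine tendsto_order.2 ⟨fun a ha => .of_forall fun n => ha.trans_le (hS₀ n), fun a ha => ?_⟩
    filter_upwards [h (a / 2) (by positivity)] with n hn
    have : a / 2 ∈ S n := ⟨by positivity, hn⟩
    exact (csInf_le ⟨0, fun e he => he.1.le⟩ this).trans_lt (by linarith)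
  refine ⟨fun n => sInf (S n) + 1 / (n + 1),
    fun n => add_pos_of_nonneg_of_pos (hS₀ n) Nat.one_div_pos_of_nat, ?_, fun n => ?_⟩
  · simpa using hlim.add tendsto_one_div_add_atTop_nhds_zero_nat
  · obtain ⟨e, ⟨-, f, hf⟩, he⟩ := exists_lt_of_csInf_lt (hS n)
      (lt_add_of_pos_right (sInf (S n)) (Nat.one_div_pos_of_nat (α := ℝ)))
    exact ⟨f, hf.mono he.le⟩

/-- If proper, geodesically complete CAT(−1) spaces `(X n, x n)` converge to
a proper, geodesically complete CAT(−1) space `(Y, y)` in the pointed Gromov–Hausdorff sense,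
then the visual boundaries `(∂ X n, ρ_{x n})` converge to `(∂ Y, ρ_y)` in the Gromov–Hausdorff
sense as compact metric spaces (formulated, equivalently for metric spaces, as
almost-isometric convergence). -/
theorem visual_boundaries_converge_of_CAT_minus_one_GH_converges
    {X : ℕ → Type u} [∀ n, MetricSpace (X n)] [∀ n, ProperSpace (X n)]
    (hgeo : ∀ n, IsGeodesicSpace (X n)) (hgc : ∀ n, IsGeodesicallyComplete (X n))
    (hcat : ∀ n, IsCATMinusOne (X n)) (x : ∀ n, X n)
    {Y : Type u} [MetricSpace Y] [ProperSpace Y]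
    (hgeoY : IsGeodesicSpace Y) (hgcY : IsGeodesicallyComplete Y) (hcatY : IsCATMinusOne Y)
    (y : Y)
    (hGH : PointedGHConverges X x Y y)
    (ρ : ∀ n, GromovBoundary (X n) → GromovBoundary (X n) → ℝ)
    (hρ : ∀ n, IsVisualMetric (x n) (ρ n))
    (ρ₀ : GromovBoundary Y → GromovBoundary Y → ℝ) (hρ₀ : IsVisualMetric y ρ₀) :
    AIConverges ρ ρ₀ := by
  refine aiConverges_of_eventually_exists_isEpsIsometry (C := 2) (fun n => ?_) fun ε hε => ?_
  · have := (hgc n).nonempty_gromovBoundary (hgeo n) (x n)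
    have := hgcY.nonempty_gromovBoundary hgeoY y
    exact exists_isEpsIsometry_two (hρ n) hρ₀
  obtain ⟨T, hTε, hT⟩ := ((tendsto_exp_neg_atTop_nhds_zero.eventually
    (ge_mem_nhds (by positivity : (0 : ℝ) < ε / 4))).and (eventually_gt_atTop 0)).exists
  obtain ⟨N, hN⟩ := hGH T hT (ε / 10) (by positivity)
  filter_upwards [eventually_ge_atTop N] with n hn
  obtain ⟨F, hF0, hFdist, hFnet⟩ := hN n hn
  exact exists_isEpsIsometry_of_ball_approx (hgc n) (hgeo n) (hcat n) hgcY hgeoY hcatY (hρ n) hρ₀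
    hT hTε le_rfl F hF0 hFdist hFnet
end

section
/- Let (Z_n, ρ_n), n ≥ 1, be a sequence of compact semi-metric spaces that AI-converges to a compact semi-metric space (Z, ρ_0). Then the family {(Z_n, ρ_n)}_{n≥1} is equicontinuous: for every ε > 0 there exists δ > 0 such that for all n and all ξ, η ∈ Z_n with ρ_n(ξ,η) < δ, one has |ρ_n(ξ,ζ) − ρ_n(η,ζ)| < ε for all ζ ∈ Z_n. -/
/-!
By compactness, a single semi-metric space admits a modulus: `ρ(ξ, η)` has a positive lower
bound on the compact set of triples with `|ρ(ξ, ζ) - ρ(η, ζ)| ≥ ε`. An `ε_n`-isometry pulls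
a modulus of the limit `(W, ρ₀)` back to `Z_n` at the cost of `O(ε_n)`, which serves all large
`n` at once; the finitely many remaining spaces are handled one at a time.
-/

open Filter Topology Metric
open scoped ENNReal

universe u v

/-- An equicontinuous family of semi-metric spaces. -/
def EquicontinuousFamily {ι : Type*} {Z : ι → Type*} (ρ : ∀ i, Z i → Z i → ℝ) : Prop :=
  ∀ ε : ℝ, 0 < ε → ∃ δ : ℝ, 0 < δ ∧ ∀ (i : ι) (ξ η : Z i), ρ i ξ η < δ →
    ∀ ζ : Z i, |ρ i ξ ζ - ρ i η ζ| < ε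

/-- `δ` is a modulus of `ρ` for `ε`, as in the definition of `EquicontinuousFamily`. -/
def IsModulus {Z : Type*} (ρ : Z → Z → ℝ) (ε δ : ℝ) : Prop :=
  ∀ ξ η, ρ ξ η < δ → ∀ ζ, |ρ ξ ζ - ρ η ζ| < ε

section Modulus

variable {Z : Type*} {ρ : Z → Z → ℝ} {ε ε' δ δ' : ℝ}

theorem IsModulus.mono (h : IsModulus ρ ε δ) (hε : ε ≤ ε') (hδ : δ' ≤ δ) :
    IsModulus ρ ε' δ' :=
  fun ξ η hξη ζ => (h ξ η (hξη.trans_le hδ) ζ).trans_le hε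

theorem IsModulus.eventually_nhdsGT (h : IsModulus ρ ε δ) (hδ : 0 < δ) :
    ∀ᶠ δ' in 𝓝[>] 0, IsModulus ρ ε δ' :=
  mem_of_superset (Ioo_mem_nhdsGT hδ) fun _ hδ' => h.mono le_rfl hδ'.2.le

theorem IsSemiMetric.exists_isModulus [TopologicalSpace Z] [CompactSpace Z]
    (hρ : IsSemiMetric ρ) (hε : 0 < ε) : ∃ δ > 0, IsModulus ρ ε δ := by
  obtain ⟨hc, -, hnonneg, hzero⟩ := hρ
  set K := {p : Z × Z × Z | ε ≤ |ρ p.1 p.2.2 - ρ p.2.1 p.2.2|}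
  have hK : IsCompact K :=
    (isClosed_le continuous_const ((hc.comp₂ (by fun_prop) (by fun_prop)).sub
      (hc.comp₂ (by fun_prop) (by fun_prop))).abs).isCompact
  have hpos : ∀ p ∈ K, 0 < ρ p.1 p.2.1 := by
    rintro ⟨ξ, η, ζ⟩ hp
    refine (hnonneg ξ η).lt_of_ne fun h => ?_
    have hp : ε ≤ |ρ ξ ζ - ρ η ζ| := hp
    rw [(hzero ξ η).1 h.symm, sub_self, abs_zero] at hp
    exact hp.not_gt hε
  obtain ⟨δ, hδ, hle⟩ :=
    hK.exists_forall_le' (hc.comp₂ (by fun_prop) (by fun_prop)).continuousOn hpos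
  exact ⟨δ, hδ, fun ξ η hξη ζ => not_le.1 fun hp => (hle (ξ, η, ζ) hp).not_gt hξη⟩

end Modulus

theorem IsEpsIsometry.isModulus {Z₁ Z₂ : Type*} {ρ₁ : Z₁ → Z₁ → ℝ} {ρ₂ : Z₂ → Z₂ → ℝ}
    {e ε δ : ℝ} {f : Z₁ → Z₂} (hf : IsEpsIsometry ρ₁ ρ₂ e f) (h : IsModulus ρ₂ ε δ) :
    IsModulus ρ₁ (ε + 2 * e) (δ - e) := by
  intro ξ η hξη ζ
  have hξη' := abs_lt.1 (hf.1 ξ η)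
  have hξζ := abs_lt.1 (hf.1 ξ ζ)
  have hηζ := abs_lt.1 (hf.1 η ζ)
  have hW := abs_lt.1 (h (f ξ) (f η) (by linarith) (f ζ))
  rw [abs_lt]
  constructor <;> linarith

theorem AIConverges.exists_eventually_isModulus {Z : ℕ → Type*} {ρ : ∀ n, Z n → Z n → ℝ}
    {W : Type*} [TopologicalSpace W] [CompactSpace W] {ρ₀ : W → W → ℝ}
    (hAI : AIConverges ρ ρ₀) (hρ₀ : IsSemiMetric ρ₀) {ε : ℝ} (hε : 0 < ε) :
    ∃ δ > 0, ∀ᶠ n in atTop, IsModulus (ρ n) ε δ := by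
  obtain ⟨e, -, he, hf⟩ := hAI
  obtain ⟨δ, hδ, hW⟩ := hρ₀.exists_isModulus (half_pos hε)
  refine ⟨δ / 2, half_pos hδ, ?_⟩
  filter_upwards [he.eventually (gt_mem_nhds (lt_min (by positivity : 0 < ε / 4) (half_pos hδ)))]
    with n hn
  obtain ⟨f, hf⟩ := hf n
  rw [lt_min_iff] at hn
  exact (hf.isModulus hW).mono (by linarith) (by linarith)

theorem EquicontinuousFamily.of_eventually_cofinite {ι : Type*} {Z : ι → Type*}
    {ρ : ∀ i, Z i → Z i → ℝ} (hρ : ∀ i ε, 0 < ε → ∃ δ > 0, IsModulus (ρ i) ε δ)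
    (hcof : ∀ ε > 0, ∃ δ > 0, ∀ᶠ i in cofinite, IsModulus (ρ i) ε δ) :
    EquicontinuousFamily ρ := by
  intro ε hε
  obtain ⟨δ₀, hδ₀, hfin⟩ := hcof ε hε
  have hexc : ∀ᶠ δ in 𝓝[>] 0, ∀ i ∈ {i | ¬IsModulus (ρ i) ε δ₀}, IsModulus (ρ i) ε δ :=
    hfin.eventually_all.2 fun i _ =>
      let ⟨_, hδ, h⟩ := hρ i ε hε
      h.eventually_nhdsGT hδ
  obtain ⟨δ, ⟨hδ, hδδ₀⟩, hδexc⟩ := (Eventually.and (Ioo_mem_nhdsGT hδ₀) hexc).exists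
  refine ⟨δ, hδ, fun i => ?_⟩
  by_cases hi : IsModulus (ρ i) ε δ₀
  · exact hi.mono le_rfl hδδ₀.le
  · exact hδexc i hi

theorem equicontinuous_of_AI_converges_general
    {Z : ℕ → Type u} [∀ n, TopologicalSpace (Z n)] [∀ n, CompactSpace (Z n)]
    (ρ : ∀ n, Z n → Z n → ℝ) (hρ : ∀ n, IsSemiMetric (ρ n))
    {W : Type v} [TopologicalSpace W] [CompactSpace W]
    (ρ₀ : W → W → ℝ) (hρ₀ : IsSemiMetric ρ₀)
    (hAI : AIConverges ρ ρ₀) :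
    EquicontinuousFamily ρ :=
  EquicontinuousFamily.of_eventually_cofinite (fun n _ hε => (hρ n).exists_isModulus hε)
    fun _ hε => by
      simpa only [Nat.cofinite_eq_atTop] using hAI.exists_eventually_isModulus hρ₀ hε

/-- An AI-convergent sequence of compact semi-metric spaces is an
equicontinuous family. -/
theorem equicontinuous_of_AI_converges
    {Z : ℕ → Type u} [∀ n, TopologicalSpace (Z n)] [∀ n, CompactSpace (Z n)]
    [∀ n, TopologicalSpace.MetrizableSpace (Z n)]
    (ρ : ∀ n, Z n → Z n → ℝ) (hρ : ∀ n, IsSemiMetric (ρ n))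
    {W : Type v} [TopologicalSpace W] [CompactSpace W] [TopologicalSpace.MetrizableSpace W]
    (ρ₀ : W → W → ℝ) (hρ₀ : IsSemiMetric ρ₀)
    (hAI : AIConverges ρ ρ₀) :
    EquicontinuousFamily ρ :=
  equicontinuous_of_AI_converges_general ρ hρ ρ₀ hρ₀ hAI
end
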